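/- Under exact EGPO updates with learning rate η satisfying 0 < η ≤ 1/(β+3), for every T ≥ 1 one has KL(π*_β ‖ π^{(T)}) ≤ KL(π*_β ‖ π^{(0)}) · (1 − ηβ)^T. -/

import Mathlib

open Real

/-- Tabular softmax policy. -/
noncomputable def softmax {Y : Type*} [Fintype Y] (θ : Y → ℝ) : Y → ℝ :=
  fun y => Real.exp (θ y) / ∑ y', Real.exp (θ y')

/-- Kullback–Leibler divergence between distributions on a finite set. -/
noncomputable def KLdiv {Y : Type*} [Fintype Y] (p q : Y → ℝ) : ℝ :=
  ∑ y, p y * Real.log (p y / q y)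

/-- `(P π)(y) = ∑ y' P(y, y') π(y')`. -/
noncomputable def matVec {Y : Type*} [Fintype Y] (P : Y → Y → ℝ) (p : Y → ℝ) : Y → ℝ :=
  fun y => ∑ y', P y y' * p y'

/-!
In logits, exact EGPO is mirror prox with the entropic mirror map, so the three-point identity
for `KLdiv` between softmax policies describes one step `θ ↦ h ↦ n` exactly:
`KL(π*‖π_n) = KL(π*‖π_θ) - KL(π_h‖π_θ) - KL(π_n‖π_h) + ⟪π_h - π*, n - θ⟫ + ⟪π_n - π_h, n - h⟫`.
By the fixed-point equation of the QRE, `n - θ = ηβ (θ* - θ) + η P (π_h - π*)`; the `P`-part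
vanishes against `π_h - π*` because `P + Pᵀ = 1`, and another three-point identity turns the
rest into `ηβ (KL(π_h‖π_θ) - KL(π_h‖π*) - KL(π*‖π_θ))`. The second inner product equals
`η ⟪π_n - π_h, P (π_h - π_θ)⟫`; since `|P - 1/2| ≤ 1/2` and `‖p - q‖₁² ≤ 4 KL(p‖q)`, it is at
most `η (KL(π_n‖π_h) + KL(π_h‖π_θ))`. For `η (β + 1) ≤ 1` everything but `(1 - ηβ) KL(π*‖π_θ)`
is then nonpositive.
-/

open Finset

section Softmax

variable {Y : Type*} [Fintype Y] [Nonempty Y]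

lemma sum_exp_pos (θ : Y → ℝ) : 0 < ∑ y, exp (θ y) :=
  sum_pos (fun _ _ => exp_pos _) univ_nonempty

lemma softmax_pos (θ : Y → ℝ) (y : Y) : 0 < softmax θ y :=
  div_pos (exp_pos _) (sum_exp_pos θ)

lemma sum_softmax (θ : Y → ℝ) : ∑ y, softmax θ y = 1 := by
  simp only [softmax, ← sum_div, div_self (sum_exp_pos θ).ne']

lemma log_softmax (θ : Y → ℝ) (y : Y) :
    log (softmax θ y) = θ y - log (∑ y', exp (θ y')) := by
  rw [softmax, log_div (exp_ne_zero _) (sum_exp_pos θ).ne', log_exp]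

lemma KLdiv_softmax (χ θ : Y → ℝ) :
    KLdiv (softmax χ) (softmax θ) =
      softmax χ ⬝ᵥ (χ - θ) + log (∑ y, exp (θ y)) - log (∑ y, exp (χ y)) := by
  have hlog (y : Y) : log (softmax χ y / softmax θ y) =
      (χ - θ) y + (log (∑ y, exp (θ y)) - log (∑ y, exp (χ y))) := by
    rw [log_div (softmax_pos χ y).ne' (softmax_pos θ y).ne', log_softmax, log_softmax,
      Pi.sub_apply]
    ring
  simp only [KLdiv, hlog, mul_add, sum_add_distrib, ← sum_mul, sum_softmax, dotProduct]
  ring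

lemma sum_softmax_sub_softmax (a b : Y → ℝ) :
    ∑ y, (softmax a - softmax b) y = 0 := by
  simp only [Pi.sub_apply, sum_sub_distrib, sum_softmax, sub_self]

lemma KLdiv_softmax_self (θ : Y → ℝ) : KLdiv (softmax θ) (softmax θ) = 0 := by
  simp [KLdiv_softmax]

lemma KLdiv_softmax_sub_KLdiv_softmax (x z a b : Y → ℝ) :
    KLdiv (softmax x) (softmax a) - KLdiv (softmax x) (softmax b) =
      KLdiv (softmax z) (softmax a) - KLdiv (softmax z) (softmax b)
        + (softmax z - softmax x) ⬝ᵥ (a - b) := by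
  simp only [KLdiv_softmax, dotProduct_sub, sub_dotProduct]
  ring

lemma KLdiv_softmax_extragradient (s a h n : Y → ℝ) :
    KLdiv (softmax s) (softmax n) =
      KLdiv (softmax s) (softmax a) - KLdiv (softmax h) (softmax a)
        - KLdiv (softmax n) (softmax h)
        + (softmax h - softmax s) ⬝ᵥ (n - a) + (softmax n - softmax h) ⬝ᵥ (n - h) := by
  simp only [KLdiv_softmax, dotProduct_sub, sub_dotProduct]
  ring

end Softmax

section Pinsker

variable {Y : Type*} [Fintype Y]

lemma two_mul_sq_sub_mul_le_sq_mul_log {a b : ℝ} (ha : 0 < a) (hb : 0 < b) :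
    2 * (a ^ 2 - a * b) ≤ a ^ 2 * log (a ^ 2 / b ^ 2) := by
  have h := one_sub_inv_le_log_of_pos (div_pos ha hb)
  rw [inv_div] at h
  rw [← div_pow, log_pow]
  calc 2 * (a ^ 2 - a * b) = 2 * a ^ 2 * (1 - b / a) := by field_simp
    _ ≤ 2 * a ^ 2 * log (a / b) := by gcongr
    _ = a ^ 2 * ((2 : ℕ) * log (a / b)) := by push_cast; ring

lemma two_mul_one_sub_sum_sqrt_mul_sqrt_le_KLdiv {p q : Y → ℝ} (hp : ∀ y, 0 < p y)
    (hq : ∀ y, 0 < q y) (hp1 : ∑ y, p y = 1) :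
    2 * (1 - ∑ y, √(p y) * √(q y)) ≤ KLdiv p q := by
  have key (y : Y) : 2 * (p y - √(p y) * √(q y)) ≤ p y * log (p y / q y) := by
    simpa only [sq_sqrt (hp y).le, sq_sqrt (hq y).le] using
      two_mul_sq_sub_mul_le_sq_mul_log (sqrt_pos.2 (hp y)) (sqrt_pos.2 (hq y))
  calc 2 * (1 - ∑ y, √(p y) * √(q y)) = ∑ y, 2 * (p y - √(p y) * √(q y)) := by
        rw [← mul_sum, sum_sub_distrib, hp1]
    _ ≤ KLdiv p q := sum_le_sum fun y _ => key y

lemma sq_sum_abs_sq_sub_sq_le {a b : Y → ℝ} (ha : ∀ y, 0 ≤ a y) (hb : ∀ y, 0 ≤ b y)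
    (ha1 : ∑ y, a y ^ 2 = 1) (hb1 : ∑ y, b y ^ 2 = 1) :
    (∑ y, |a y ^ 2 - b y ^ 2|) ^ 2 ≤ (2 - 2 * ∑ y, a y * b y) * (2 + 2 * ∑ y, a y * b y) := by
  have hfactor (y : Y) : |a y ^ 2 - b y ^ 2| = |a y - b y| * (a y + b y) := by
    rw [sq_sub_sq, abs_mul, abs_of_nonneg (add_nonneg (ha y) (hb y)), mul_comm]
  have hminus : ∑ y, |a y - b y| ^ 2 = 2 - 2 * ∑ y, a y * b y := by
    simp only [sq_abs, sub_sq, sum_add_distrib, sum_sub_distrib, ha1, hb1, mul_assoc, ← mul_sum]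
    ring
  have hplus : ∑ y, (a y + b y) ^ 2 = 2 + 2 * ∑ y, a y * b y := by
    simp only [add_sq, sum_add_distrib, ha1, hb1, mul_assoc, ← mul_sum]
    ring
  simp only [hfactor, ← hminus, ← hplus]
  exact sum_mul_sq_le_sq_mul_sq _ _ _

/-- Pinsker's inequality with the constant `4` in place of `2`, obtained through the Hellinger
distance. -/
lemma sq_sum_abs_sub_le_four_mul_KLdiv {p q : Y → ℝ} (hp : ∀ y, 0 < p y) (hq : ∀ y, 0 < q y)
    (hp1 : ∑ y, p y = 1) (hq1 : ∑ y, q y = 1) :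
    (∑ y, |p y - q y|) ^ 2 ≤ 4 * KLdiv p q := by
  have hsq (r : Y → ℝ) (hr : ∀ y, 0 < r y) (y : Y) : √(r y) ^ 2 = r y := sq_sqrt (hr y).le
  have hTV := sq_sum_abs_sq_sub_sq_le (a := fun y => √(p y)) (b := fun y => √(q y))
    (fun _ => sqrt_nonneg _) (fun _ => sqrt_nonneg _)
    (by simpa only [hsq p hp] using hp1) (by simpa only [hsq q hq] using hq1)
  simp only [hsq p hp, hsq q hq] at hTV
  have hHel := two_mul_one_sub_sum_sqrt_mul_sqrt_le_KLdiv hp hq hp1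
  nlinarith [sq_nonneg (1 - ∑ y, √(p y) * √(q y))]

lemma KLdiv_nonneg {p q : Y → ℝ} (hp : ∀ y, 0 < p y) (hq : ∀ y, 0 < q y)
    (hp1 : ∑ y, p y = 1) (hq1 : ∑ y, q y = 1) : 0 ≤ KLdiv p q := by
  nlinarith [sq_sum_abs_sub_le_four_mul_KLdiv hp hq hp1 hq1, sq_nonneg (∑ y, |p y - q y|)]

variable [Nonempty Y]

lemma sq_sum_abs_softmax_sub_le (a b : Y → ℝ) :
    (∑ y, |(softmax a - softmax b) y|) ^ 2 ≤ 4 * KLdiv (softmax a) (softmax b) :=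
  sq_sum_abs_sub_le_four_mul_KLdiv (softmax_pos a) (softmax_pos b) (sum_softmax a) (sum_softmax b)

lemma KLdiv_softmax_nonneg (a b : Y → ℝ) : 0 ≤ KLdiv (softmax a) (softmax b) :=
  KLdiv_nonneg (softmax_pos a) (softmax_pos b) (sum_softmax a) (sum_softmax b)

end Pinsker

section Preference

variable {Y : Type*} [Fintype Y]

lemma matVec_sub (P : Y → Y → ℝ) (p q : Y → ℝ) :
    matVec P (p - q) = matVec P p - matVec P q := by
  ext y
  simp only [matVec, Pi.sub_apply, mul_sub, sum_sub_distrib]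

variable {P : Y → Y → ℝ}

/-- `P + Pᵀ` is the all-ones matrix, which annihilates zero-sum vectors. -/
lemma dotProduct_matVec_self_eq_zero (hP : ∀ y y', P y y' + P y' y = 1) {v : Y → ℝ}
    (hv : ∑ y, v y = 0) : v ⬝ᵥ matVec P v = 0 := by
  have hswap : v ⬝ᵥ matVec P v = ∑ y, ∑ y', v y * v y' * P y' y := by
    simp only [dotProduct, matVec, mul_sum]
    rw [sum_comm]
    exact sum_congr rfl fun _ _ => sum_congr rfl fun _ _ => by ring
  have hdouble : 2 * (v ⬝ᵥ matVec P v) = (∑ y, v y) ^ 2 := by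
    calc 2 * (v ⬝ᵥ matVec P v) = ∑ y, ∑ y', v y * v y' * (P y y' + P y' y) := by
          rw [two_mul]
          nth_rewrite 2 [hswap]
          simp only [dotProduct, matVec, mul_sum, ← sum_add_distrib]
          exact sum_congr rfl fun _ _ => sum_congr rfl fun _ _ => by ring
      _ = (∑ y, v y) ^ 2 := by simp only [hP, mul_one, sq, sum_mul_sum]
  rw [hv] at hdouble
  linarith

lemma abs_matVec_le (hP0 : ∀ y y', 0 ≤ P y y') (hP1 : ∀ y y', P y y' ≤ 1) {v : Y → ℝ}
    (hv : ∑ y, v y = 0) (y : Y) : |matVec P v y| ≤ (∑ y', |v y'|) / 2 := by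
  have hcenter : matVec P v y = ∑ y', (P y y' - 1 / 2) * v y' := by
    simp only [matVec, sub_mul, sum_sub_distrib, ← mul_sum, hv, mul_zero, sub_zero]
  have hentry (y' : Y) : |P y y' - 1 / 2| ≤ 1 / 2 :=
    abs_le.2 ⟨by linarith [hP0 y y'], by linarith [hP1 y y']⟩
  calc |matVec P v y| ≤ ∑ y', |P y y' - 1 / 2| * |v y'| := by
        rw [hcenter]
        exact (abs_sum_le_sum_abs _ _).trans_eq (by simp only [abs_mul])
    _ ≤ ∑ y', 1 / 2 * |v y'| := by gcongr with y'; exact hentry y'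
    _ = (∑ y', |v y'|) / 2 := by rw [← mul_sum]; ring

lemma dotProduct_matVec_le (hP0 : ∀ y y', 0 ≤ P y y') (hP1 : ∀ y y', P y y' ≤ 1)
    (u : Y → ℝ) {v : Y → ℝ} (hv : ∑ y, v y = 0) :
    u ⬝ᵥ matVec P v ≤ (∑ y, |u y|) * (∑ y, |v y|) / 2 := by
  calc u ⬝ᵥ matVec P v ≤ ∑ y, |u y| * |matVec P v y| := by
        simp only [dotProduct, ← abs_mul]
        exact sum_le_sum fun _ _ => le_abs_self _
    _ ≤ ∑ y, |u y| * ((∑ y', |v y'|) / 2) := by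
        gcongr with y
        exact abs_matVec_le hP0 hP1 hv y
    _ = (∑ y, |u y|) * (∑ y, |v y|) / 2 := by rw [← sum_mul]; ring

end Preference

section EGPO

variable {Y : Type*} [Fintype Y] {P : Y → Y → ℝ} {β η : ℝ} {θref θstar : Y → ℝ}

/-- Both half steps of exact EGPO are `egpoStep` from `θ^{(t)}`, against `p = π^{(t)}` for the
extrapolation and against `p = π^{(t+1/2)}` for the update. -/
noncomputable def egpoStep (P : Y → Y → ℝ) (β η : ℝ) (θref θ p : Y → ℝ) : Y → ℝ :=
  fun y => (1 - η * β) * θ y + η * β * (θref y + matVec P p y / β)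

lemma egpoStep_sub_egpoStep (hβ : β ≠ 0) (θ p p' : Y → ℝ) :
    egpoStep P β η θref θ p - egpoStep P β η θref θ p' = η • matVec P (p - p') := by
  ext y
  simp only [egpoStep, matVec_sub, Pi.sub_apply, Pi.smul_apply, smul_eq_mul]
  field_simp
  ring

lemma egpoStep_sub_self (hβ : β ≠ 0)
    (hstar : θstar = fun y => θref y + matVec P (softmax θstar) y / β) (θ p : Y → ℝ) :
    egpoStep P β η θref θ p - θ =
      (η * β) • (θstar - θ) + η • matVec P (p - softmax θstar) := by
  ext y
  simp only [egpoStep, matVec_sub, Pi.sub_apply, Pi.add_apply, Pi.smul_apply, smul_eq_mul]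
  rw [congrFun hstar y]
  field_simp
  ring

lemma dotProduct_egpoStep_sub_self [Nonempty Y] (hPsum : ∀ y y', P y y' + P y' y = 1)
    (hβ : β ≠ 0) (hstar : θstar = fun y => θref y + matVec P (softmax θstar) y / β)
    (θ h : Y → ℝ) :
    (softmax h - softmax θstar) ⬝ᵥ (egpoStep P β η θref θ (softmax h) - θ) =
      η * β * (KLdiv (softmax h) (softmax θ) - KLdiv (softmax h) (softmax θstar)
        - KLdiv (softmax θstar) (softmax θ)) := by
  have hskew := dotProduct_matVec_self_eq_zero hPsum (sum_softmax_sub_softmax h θstar)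
  have hthree := KLdiv_softmax_sub_KLdiv_softmax θstar h θstar θ
  rw [KLdiv_softmax_self] at hthree
  rw [egpoStep_sub_self hβ hstar, dotProduct_add, dotProduct_smul, dotProduct_smul, hskew,
    smul_eq_mul, smul_eq_mul, mul_zero, add_zero]
  linear_combination (-(η * β)) * hthree

lemma dotProduct_egpoStep_sub_egpoStep_le [Nonempty Y] (hP0 : ∀ y y', 0 ≤ P y y')
    (hP1 : ∀ y y', P y y' ≤ 1) (hβ : β ≠ 0) (hη : 0 ≤ η) (θ h n : Y → ℝ) :
    (softmax n - softmax h) ⬝ᵥ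
        (egpoStep P β η θref θ (softmax h) - egpoStep P β η θref θ (softmax θ)) ≤
      η * (KLdiv (softmax n) (softmax h) + KLdiv (softmax h) (softmax θ)) := by
  rw [egpoStep_sub_egpoStep hβ, dotProduct_smul, smul_eq_mul]
  have hbilin := dotProduct_matVec_le hP0 hP1 (softmax n - softmax h)
    (sum_softmax_sub_softmax h θ)
  have hnh := sq_sum_abs_softmax_sub_le n h
  have hhθ := sq_sum_abs_softmax_sub_le h θ
  gcongr
  nlinarith [sq_nonneg (∑ y, |(softmax n - softmax h) y| - ∑ y, |(softmax h - softmax θ) y|)]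

theorem KLdiv_softmax_egpoStep_le [Nonempty Y] (hP0 : ∀ y y', 0 ≤ P y y')
    (hP1 : ∀ y y', P y y' ≤ 1) (hPsum : ∀ y y', P y y' + P y' y = 1) (hβ : 0 < β)
    (hstar : θstar = fun y => θref y + matVec P (softmax θstar) y / β)
    (hη : 0 ≤ η) (hηβ : η * (β + 1) ≤ 1) {θ h n : Y → ℝ}
    (hh : h = egpoStep P β η θref θ (softmax θ)) (hn : n = egpoStep P β η θref θ (softmax h)) :
    KLdiv (softmax θstar) (softmax n) ≤ (1 - η * β) * KLdiv (softmax θstar) (softmax θ) := by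
  have hmain := dotProduct_egpoStep_sub_self (η := η) hPsum hβ.ne' hstar θ h
  have herr := dotProduct_egpoStep_sub_egpoStep_le (θref := θref) hP0 hP1 hβ.ne' hη θ h n
  rw [← hn] at hmain
  rw [← hn, ← hh] at herr
  have hη1 : η ≤ 1 := by nlinarith
  rw [KLdiv_softmax_extragradient θstar θ h n]
  linarith [mul_nonneg (mul_nonneg hη hβ.le) (KLdiv_softmax_nonneg h θstar),
    mul_nonneg (sub_nonneg.2 hηβ) (KLdiv_softmax_nonneg h θ),
    mul_nonneg (sub_nonneg.2 hη1) (KLdiv_softmax_nonneg n h)]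

end EGPO

theorem egpo_exact_linear_convergence_kl_general
    {Y : Type*} [Fintype Y] (hY : 2 ≤ Fintype.card Y)
    (P : Y → Y → ℝ)
    (hP0 : ∀ y y', 0 ≤ P y y') (hP1 : ∀ y y', P y y' ≤ 1)
    (hPsum : ∀ y y', P y y' + P y' y = 1)
    (β : ℝ) (hβ : 0 < β)
    (θref : Y → ℝ)
    (θstar : Y → ℝ)
    (hstar : θstar = fun y => θref y + matVec P (softmax θstar) y / β)
    (η : ℝ) (hη : 0 < η) (hη' : η ≤ 1 / (β + 3))
    (θ θhalf : ℕ → Y → ℝ)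
    (hhalf : ∀ t, θhalf t = fun y =>
      (1 - η * β) * θ t y + η * β * (θref y + matVec P (softmax (θ t)) y / β))
    (hstep : ∀ t, θ (t + 1) = fun y =>
      (1 - η * β) * θ t y + η * β * (θref y + matVec P (softmax (θhalf t)) y / β))
    (T : ℕ) :
    KLdiv (softmax θstar) (softmax (θ T))
      ≤ KLdiv (softmax θstar) (softmax (θ 0)) * (1 - η * β) ^ T := by
  have : Nonempty Y := Fintype.card_pos_iff.mp (by omega)
  have hηβ : η * (β + 1) ≤ 1 := by
    rw [le_div_iff₀ (by linarith)] at hη'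
    linarith
  induction T with
  | zero => simp
  | succ t ih =>
    calc KLdiv (softmax θstar) (softmax (θ (t + 1)))
        ≤ (1 - η * β) * KLdiv (softmax θstar) (softmax (θ t)) :=
          KLdiv_softmax_egpoStep_le hP0 hP1 hPsum hβ hstar hη.le hηβ (hhalf t) (hstep t)
      _ ≤ (1 - η * β) * (KLdiv (softmax θstar) (softmax (θ 0)) * (1 - η * β) ^ t) := by
          gcongr
          linarith
      _ = KLdiv (softmax θstar) (softmax (θ 0)) * (1 - η * β) ^ (t + 1) := by ring

/-- under exact EGPO updates with `0 < η ≤ 1/(β+3)`, for every `T ≥ 1`,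
`KL(π*_β ‖ π^{(T)}) ≤ KL(π*_β ‖ π^{(0)}) · (1 − ηβ)^T`. -/
theorem egpo_exact_linear_convergence_kl
    {Y : Type*} [Fintype Y] (hY : 2 ≤ Fintype.card Y)
    (P : Y → Y → ℝ)
    (hP0 : ∀ y y', 0 ≤ P y y') (hP1 : ∀ y y', P y y' ≤ 1)
    (hPsum : ∀ y y', P y y' + P y' y = 1)
    (β : ℝ) (hβ : 0 < β)
    (θref : Y → ℝ)
    (θstar : Y → ℝ)
    (hstar : θstar = fun y => θref y + matVec P (softmax θstar) y / β)
    (η : ℝ) (hη : 0 < η) (hη' : η ≤ 1 / (β + 3))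
    (θ θhalf : ℕ → Y → ℝ)
    (hhalf : ∀ t, θhalf t = fun y =>
      (1 - η * β) * θ t y + η * β * (θref y + matVec P (softmax (θ t)) y / β))
    (hstep : ∀ t, θ (t + 1) = fun y =>
      (1 - η * β) * θ t y + η * β * (θref y + matVec P (softmax (θhalf t)) y / β))
    (T : ℕ) (hT : 1 ≤ T) :
    KLdiv (softmax θstar) (softmax (θ T))
      ≤ KLdiv (softmax θstar) (softmax (θ 0)) * (1 - η * β) ^ T :=
  egpo_exact_linear_convergence_kl_general hY P hP0 hP1 hPsum β hβ θref θstar hstar η hη hη' θ θhalf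
    hhalf hstep T
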